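/- Let X be a nonempty compact metric space and let 0 ≤ s ≤ t be real numbers. Let Y and Z be nonempty compact metric spaces for which there exist bijections f : X → Y and g : X → Z satisfying dist(f(x), f(x')) = s·dist(x, x') and dist(g(x), g(x')) = t·dist(x, x') for all x, x' ∈ X (so Y and Z are the rescaled copies sX and tX of X). Then d_GH(Y, Z) = (t − s)·diam X / 2. In particular, the curve λ ↦ λX, λ ∈ [0, ∞), is a geodesic with respect to the Gromov–Hausdorff distance in the cloud of bounded metric spaces. -/
import Mathlib

open Metric Set GromovHausdorff

namespace GHRescaleAux

/-- Type synonym to carry a custom metric. -/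
def GHSum (X : Type*) : Type _ := X ⊕ X

variable {X : Type*} [MetricSpace X]

/-- intended distance on `GHSum X` -/
def ghD (s t c : ℝ) : GHSum X → GHSum X → ℝ
  | Sum.inl x, Sum.inl x' => s * dist x x'
  | Sum.inr x, Sum.inr x' => t * dist x x'
  | Sum.inl x, Sum.inr x' => s * dist x x' + c
  | Sum.inr x, Sum.inl x' => s * dist x x' + c

def ghMetric (s t c : ℝ) (hs : 0 < s) (hst : s ≤ t) (hc : 0 < c)
    (hd : ∀ x x' : X, (t - s) * dist x x' ≤ 2 * c) : MetricSpace (GHSum X) where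
  dist := ghD s t c
  dist_self p := by cases p <;> simp [ghD]
  dist_comm p q := by
    cases p <;> cases q <;> simp [ghD, dist_comm]
  dist_triangle p q r := by
    have hs' := hs.le
    cases p with
    | inl x =>
      cases q with
      | inl y =>
        cases r with
        | inl z =>
          simp only [ghD]
          nlinarith [mul_le_mul_of_nonneg_left (dist_triangle x y z) hs']
        | inr z =>
          simp only [ghD]
          nlinarith [mul_le_mul_of_nonneg_left (dist_triangle x y z) hs']
      | inr y =>
        cases r with
        | inl z =>
          simp only [ghD]
          nlinarith [mul_le_mul_of_nonneg_left (dist_triangle x y z) hs']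
        | inr z =>
          simp only [ghD]
          nlinarith [mul_le_mul_of_nonneg_left (dist_triangle x y z) hs',
            mul_le_mul_of_nonneg_right hst (@dist_nonneg X _ y z)]
    | inr x =>
      cases q with
      | inl y =>
        cases r with
        | inl z =>
          simp only [ghD]
          nlinarith [mul_le_mul_of_nonneg_left (dist_triangle x y z) hs']
        | inr z =>
          simp only [ghD]
          nlinarith [mul_le_mul_of_nonneg_left (dist_triangle x y z) hs', hd x z]
      | inr y =>
        cases r with
        | inl z =>
          simp only [ghD]
          nlinarith [mul_le_mul_of_nonneg_left (dist_triangle x y z) hs',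
            mul_le_mul_of_nonneg_right hst (@dist_nonneg X _ x y)]
        | inr z =>
          simp only [ghD]
          nlinarith [mul_le_mul_of_nonneg_left (dist_triangle x y z) (hs'.trans hst)]
  eq_of_dist_eq_zero := by
    intro p q h
    cases p with
    | inl x =>
      cases q with
      | inl x' =>
        simp only [ghD] at h
        rcases mul_eq_zero.mp h with h' | h'
        · exact absurd h' hs.ne'
        · rw [dist_eq_zero.mp h']
      | inr x' =>
        simp only [ghD] at h
        exfalso
        nlinarith [mul_nonneg hs.le (@dist_nonneg X _ x x')]
    | inr x =>
      cases q with
      | inl x' =>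
        simp only [ghD] at h
        exfalso
        nlinarith [mul_nonneg hs.le (@dist_nonneg X _ x x')]
      | inr x' =>
        simp only [ghD] at h
        rcases mul_eq_zero.mp h with h' | h'
        · exact absurd h' (hs.trans_le hst).ne'
        · rw [dist_eq_zero.mp h']

lemma diam_le_diam_add_two_hausdorffDist {γ : Type*} [MetricSpace γ] {A B : Set γ}
    (hA : A.Nonempty) (hB : B.Nonempty) (bA : Bornology.IsBounded A)
    (bB : Bornology.IsBounded B) :
    diam B ≤ diam A + 2 * hausdorffDist A B := by
  have fin : EMetric.hausdorffEdist A B ≠ ⊤ :=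
    hausdorffEdist_ne_top_of_nonempty_of_bounded hA hB bA bB
  refine le_of_forall_pos_le_add fun ε hε => ?_
  have hlt : hausdorffDist A B < hausdorffDist A B + ε / 2 := by linarith
  have h0 : (0 : ℝ) ≤ diam A + 2 * hausdorffDist A B + ε := by
    have := hausdorffDist_nonneg (s := A) (t := B)
    have := diam_nonneg (s := A)
    linarith
  refine diam_le_of_forall_dist_le h0 fun b hb b' hb' => ?_
  obtain ⟨a, ha, hba⟩ := exists_dist_lt_of_hausdorffDist_lt' hb hlt fin
  obtain ⟨a', ha', hba'⟩ := exists_dist_lt_of_hausdorffDist_lt' hb' hlt fin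
  have h1 : dist b b' ≤ dist b a + dist a a' + dist a' b' := dist_triangle4 b a a' b'
  have h2 : dist a a' ≤ diam A := dist_le_diam_of_mem bA ha ha'
  have h3 : dist a' b' = dist b' a' := dist_comm _ _
  have h4 : dist b a = dist a b := dist_comm _ _
  linarith


end GHRescaleAux

theorem ghDist_rescaled_copies
    (X Y Z : Type*) [MetricSpace X] [CompactSpace X] [Nonempty X]
    [MetricSpace Y] [CompactSpace Y] [Nonempty Y]
    [MetricSpace Z] [CompactSpace Z] [Nonempty Z]
    (s t : ℝ) (hs : 0 ≤ s) (hst : s ≤ t)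
    (f : X → Y) (g : X → Z)
    (hf : Function.Bijective f) (hg : Function.Bijective g)
    (hfd : ∀ x x' : X, dist (f x) (f x') = s * dist x x')
    (hgd : ∀ x x' : X, dist (g x) (g x') = t * dist x x') :
    GromovHausdorff.ghDist Y Z = (t - s) * Metric.diam (Set.univ : Set X) / 2 := by
  classical
  set dX := Metric.diam (Set.univ : Set X) with hdX
  have hdX0 : 0 ≤ dX := diam_nonneg
  have hbX : Bornology.IsBounded (Set.univ : Set X) := isCompact_univ.isBounded
  set ef : X ≃ Y := Equiv.ofBijective f hf with hef
  set eg : X ≃ Z := Equiv.ofBijective g hg with heg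
  -- diameters of Y and Z
  have hYdiam : diam (univ : Set Y) ≤ s * dX := by
    refine diam_le_of_forall_dist_le (mul_nonneg hs hdX0) fun y _ y' _ => ?_
    obtain ⟨x, rfl⟩ := hf.2 y
    obtain ⟨x', rfl⟩ := hf.2 y'
    rw [hfd]
    exact mul_le_mul_of_nonneg_left (dist_le_diam_of_mem hbX trivial trivial) hs
  have hZdiam : t * dX ≤ diam (univ : Set Z) := by
    rcases eq_or_lt_of_le (hs.trans hst) with ht0 | ht0
    · rw [← ht0]; simpa using diam_nonneg (s := (univ : Set Z))
    · have : dX ≤ diam (univ : Set Z) / t := by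
        refine diam_le_of_forall_dist_le (div_nonneg diam_nonneg ht0.le) fun x _ x' _ => ?_
        rw [le_div_iff₀ ht0, mul_comm, ← hgd]
        exact dist_le_diam_of_mem isCompact_univ.isBounded trivial trivial
      calc t * dX ≤ t * (diam (univ : Set Z) / t) := by
            exact mul_le_mul_of_nonneg_left this ht0.le
        _ = diam (univ : Set Z) := by field_simp
  -- lower bound
  have hlow : (t - s) * dX ≤ 2 * ghDist Y Z := by
    obtain ⟨Φ, Ψ, Φisom, Ψisom, hΦΨ⟩ := ghDist_eq_hausdorffDist Y Z
    have hAne : (Set.range Φ).Nonempty := range_nonempty _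
    have hBne : (Set.range Ψ).Nonempty := range_nonempty _
    have hAb : Bornology.IsBounded (Set.range Φ) :=
      (isCompact_range Φisom.continuous).isBounded
    have hBb : Bornology.IsBounded (Set.range Ψ) :=
      (isCompact_range Ψisom.continuous).isBounded
    have key := GHRescaleAux.diam_le_diam_add_two_hausdorffDist hAne hBne hAb hBb
    rw [Φisom.diam_range, Ψisom.diam_range, ← hΦΨ] at key
    linarith
  -- case split on degeneracy
  rcases eq_or_lt_of_le (mul_nonneg (sub_nonneg.mpr hst) hdX0) with hc0 | hc0
  · -- (t - s) * dX = 0 : Y and Z are isometric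
    have hts : ∀ x x' : X, t * dist x x' = s * dist x x' := by
      intro x x'
      have h1 : (t - s) * dist x x' ≤ (t - s) * dX :=
        mul_le_mul_of_nonneg_left (dist_le_diam_of_mem hbX trivial trivial)
          (sub_nonneg.mpr hst)
      have h2 : 0 ≤ (t - s) * dist x x' :=
        mul_nonneg (sub_nonneg.mpr hst) dist_nonneg
      nlinarith
    have e : Y ≃ᵢ Z :=
      { toEquiv := ef.symm.trans eg
        isometry_toFun := Isometry.of_dist_eq fun y y' => by
          show dist (g (ef.symm y)) (g (ef.symm y')) = dist y y'
          rw [hgd, hts]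
          have : ∀ x : X, f x = ef x := fun _ => rfl
          conv_rhs => rw [← ef.apply_symm_apply y, ← ef.apply_symm_apply y']
          rw [← this, ← this, hfd] }
    have : toGHSpace Y = toGHSpace Z :=
      (toGHSpace_eq_toGHSpace_iff_isometryEquiv).mpr ⟨e⟩
    rw [ghDist, this, dist_self, ← hc0]
    ring
  · -- main case : (t - s) * dX > 0, so s > 0
    have hs' : 0 < s := by
      rcases eq_or_lt_of_le hs with h0 | h0
      · exfalso
        have hsub : Subsingleton X := by
          constructor
          intro x x'
          apply hf.1
          have : dist (f x) (f x') = 0 := by rw [hfd, ← h0, zero_mul]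
          exact dist_eq_zero.mp this
        have : dX = 0 := by
          rw [hdX]
          exact diam_subsingleton (subsingleton_of_subsingleton)
        rw [this, mul_zero] at hc0
        exact lt_irrefl 0 hc0
      · exact h0
    set c : ℝ := (t - s) * dX / 2 with hc
    have hcpos : 0 < c := by positivity
    have hd : ∀ x x' : X, (t - s) * dist x x' ≤ 2 * c := by
      intro x x'
      have : dist x x' ≤ dX := dist_le_diam_of_mem hbX trivial trivial
      have h2 := mul_le_mul_of_nonneg_left this (sub_nonneg.mpr hst)
      rw [hc]; linarith
    letI : MetricSpace (GHRescaleAux.GHSum X) :=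
      GHRescaleAux.ghMetric s t c hs' hst hcpos hd
    set Φ : Y → GHRescaleAux.GHSum X := fun y => Sum.inl (ef.symm y) with hΦ
    set Ψ : Z → GHRescaleAux.GHSum X := fun z => Sum.inr (eg.symm z) with hΨ
    have Φisom : Isometry Φ := by
      refine Isometry.of_dist_eq fun y y' => ?_
      show GHRescaleAux.ghD s t c (Sum.inl (ef.symm y)) (Sum.inl (ef.symm y')) = dist y y'
      show s * dist (ef.symm y) (ef.symm y') = dist y y'
      rw [← hfd]
      congr 1 <;> exact (ef.apply_symm_apply _)
    have Ψisom : Isometry Ψ := by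
      refine Isometry.of_dist_eq fun z z' => ?_
      show GHRescaleAux.ghD s t c (Sum.inr (eg.symm z)) (Sum.inr (eg.symm z')) = dist z z'
      show t * dist (eg.symm z) (eg.symm z') = dist z z'
      rw [← hgd]
      congr 1 <;> exact (eg.apply_symm_apply _)
    have hupper : ghDist Y Z ≤ c := by
      refine le_trans (ghDist_le_hausdorffDist Φisom Ψisom) ?_
      refine hausdorffDist_le_of_mem_dist hcpos.le ?_ ?_
      · rintro p ⟨y, rfl⟩
        refine ⟨Ψ (eg (ef.symm y)), mem_range_self _, ?_⟩
        have : dist (Φ y) (Ψ (eg (ef.symm y))) =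
            s * dist (ef.symm y) (eg.symm (eg (ef.symm y))) + c := rfl
        rw [this, eg.symm_apply_apply, dist_self, mul_zero, zero_add]
      · rintro p ⟨z, rfl⟩
        refine ⟨Φ (ef (eg.symm z)), mem_range_self _, ?_⟩
        have : dist (Ψ z) (Φ (ef (eg.symm z))) =
            s * dist (eg.symm z) (ef.symm (ef (eg.symm z))) + c := rfl
        rw [this, ef.symm_apply_apply, dist_self, mul_zero, zero_add]
    rw [hc] at hupper
    linarith
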